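/- arXiv:math/0310408 — 2 statements merged into one kernel-verified Lean document; each statement's English description precedes it below -/
import Mathlib

section
/- In the charged free fermion Fock space, if A : F → F is a charge-zero operator satisfying [A ⊗ A, Σ_{r ∈ 1/2 + ℤ} ψ⁺_r ⊗ ψ⁻_{-r}] = 0, then the vector A|0⟩ satisfies the fermionic Hirota bilinear equation Σ_{r ∈ 1/2 + ℤ} ψ⁺_r A|0⟩ ⊗ ψ⁻_{-r} A|0⟩ = 0. -/
open scoped TensorProduct

open TensorProduct in
theorem finsum_map_tmul_self_eq_zero_of_apply_eq_zero {R M : Type*} [CommSemiring R]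
    [AddCommMonoid M] [Module R M] (f g : ℤ → Module.End R M) (v : M)
    (hf : ∀ m : ℤ, 0 ≤ m → f m v = 0) (hg : ∀ m : ℤ, 0 ≤ m → g m v = 0) :
    ∑ᶠ m : ℤ, map (f m) (g (-m - 1)) (v ⊗ₜ[R] v) = 0 := by
  refine finsum_eq_zero_of_forall_eq_zero fun m => ?_
  rw [map_tmul]
  rcases le_or_gt 0 m with hm | hm
  · rw [hf m hm, zero_tmul]
  · rw [hg (-m - 1) (by omega), tmul_zero]

theorem hirota_bilinear_of_commutes_general
    (F : Type*) [AddCommGroup F] [Module ℂ F]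
    (ψp ψm : ℤ → Module.End ℂ F) (vac : F)
    (A : Module.End ℂ F)
    -- the positive modes annihilate the vacuum:
    (hvacp : ∀ m : ℤ, 0 ≤ m → ψp m vac = 0)
    (hvacm : ∀ m : ℤ, 0 ≤ m → ψm m vac = 0)
    -- `[A ⊗ A, Σ_r ψ⁺_r ⊗ ψ⁻_{-r}] = 0`:
    (hA : ∀ v : F ⊗[ℂ] F,
      ∑ᶠ m : ℤ, TensorProduct.map (ψp m) (ψm (-m - 1)) (TensorProduct.map A A v)
        = TensorProduct.map A A (∑ᶠ m : ℤ, TensorProduct.map (ψp m) (ψm (-m - 1)) v)) :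
    ∑ᶠ m : ℤ, (ψp m (A vac)) ⊗ₜ[ℂ] (ψm (-m - 1) (A vac)) = 0 := by
  have h := hA (vac ⊗ₜ[ℂ] vac)
  rw [finsum_map_tmul_self_eq_zero_of_apply_eq_zero ψp ψm vac hvacp hvacm, map_zero,
    TensorProduct.map_tmul] at h
  simpa only [TensorProduct.map_tmul] using h

/-- In the charged free fermion Fock space `F`, index the fermion
modes by integers: `ψp m` stands for `ψ⁺_{m + 1/2}` and `ψm m` for
`ψ⁻_{m + 1/2}` (so `r = m + 1/2 > 0` iff `0 ≤ m`, and the pairing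
`ψ⁺_r ⊗ ψ⁻_{-r}` corresponds to `ψp m ⊗ ψm (-m-1)`).  If `A : F → F` is a
charge-zero operator (it commutes with the charge operator `α₀`) satisfying
`[A ⊗ A, Σ_{r ∈ 1/2+ℤ} ψ⁺_r ⊗ ψ⁻_{-r}] = 0`, then the vector `A|0⟩` satisfies
the fermionic Hirota bilinear equation
`Σ_{r ∈ 1/2+ℤ} ψ⁺_r A|0⟩ ⊗ ψ⁻_{-r} A|0⟩ = 0`. -/
theorem hirota_bilinear_of_commutes
    (F : Type*) [AddCommGroup F] [Module ℂ F]
    (ψp ψm : ℤ → Module.End ℂ F) (vac : F)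
    (α₀ A : Module.End ℂ F)
    -- the positive modes annihilate the vacuum:
    (hvacp : ∀ m : ℤ, 0 ≤ m → ψp m vac = 0)
    (hvacm : ∀ m : ℤ, 0 ≤ m → ψm m vac = 0)
    -- `A` has charge zero:
    (hcharge : A * α₀ = α₀ * A)
    -- `[A ⊗ A, Σ_r ψ⁺_r ⊗ ψ⁻_{-r}] = 0`:
    (hA : ∀ v : F ⊗[ℂ] F,
      ∑ᶠ m : ℤ, TensorProduct.map (ψp m) (ψm (-m - 1)) (TensorProduct.map A A v)
        = TensorProduct.map A A (∑ᶠ m : ℤ, TensorProduct.map (ψp m) (ψm (-m - 1)) v)) :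
    ∑ᶠ m : ℤ, (ψp m (A vac)) ⊗ₜ[ℂ] (ψm (-m - 1) (A vac)) = 0 :=
  hirota_bilinear_of_commutes_general F ψp ψm vac A hvacp hvacm hA
end

section
/- The operators α_n = Σ_{r ∈ 1/2+ℤ} :ψ⁺_{-r} ψ⁻_{r+n}: on the fermionic Fock space satisfy the Heisenberg commutation relations [α_m, α_n] = m δ_{m,-n} · Id. -/
/-- The boson mode `α_n = Σ_{r ∈ 1/2+ℤ} :ψ⁺_{-r} ψ⁻_{r+n}:` acting on a vector,
with half-integers coded by integers (`ψp m = ψ⁺_{m+1/2}`, `ψm m = ψ⁻_{m+1/2}`,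
so that `r = m + 1/2`, `-r = (-m-1) + 1/2`, and `r + n = (m+n) + 1/2`), and the
normal ordering `:ψ⁺_a ψ⁻_b: = ψ⁺_a ψ⁻_b` if `b > 0` and `= -ψ⁻_b ψ⁺_a` if
`b < 0`. -/
noncomputable def bosonMode {F : Type*} [AddCommGroup F] [Module ℂ F]
    (ψp ψm : ℤ → Module.End ℂ F) (n : ℤ) (v : F) : F :=
  ∑ᶠ m : ℤ,
    if 0 ≤ m + n then ψp (-m - 1) (ψm (m + n) v)
    else -(ψm (m + n) (ψp (-m - 1) v))

/-!
Write `E i j = ψ⁺_{-(i+1/2)} ψ⁻_{j+1/2}` (`fermionBilinear`). The anticommutation relations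
make the `E i j` satisfy the `gl(∞)` relations `[E i j, E k l] = δ_{jk} E i l - δ_{li} E k j`,
and each normal-ordered term of `α_n` differs from `E m (m + n)` by a scalar, which drops out of
commutators. On a fixed vector, `α_n` agrees with its truncation to `-M ≤ m < M`, and the
commutator of two truncations is a difference of sums of `E m (m + p + q) v` over two windows,
one shifted against the other. Since `E m (m + p + q) v` vanishes for large `m` and equals
`δ_{p+q,0} v` for very negative `m`, the difference is the offset `p` between the lower ends of
the windows, times `δ_{p+q,0} v`.
-/

open Finset

attribute [local instance] LieRing.ofAssociativeRing

theorem lie_sub_sub_of_commute {R : Type*} [Ring R] {x y s t : R}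
    (hsy : Commute s y) (htx : Commute t x) (hst : Commute s t) :
    ⁅x - s, y - t⁆ = ⁅x, y⁆ := by
  simp only [Ring.lie_def, sub_mul, mul_sub, hsy.eq, htx.eq, hst.eq]
  abel

theorem lie_mul_mul_eq_anticomm {R : Type*} [Ring R] (a b c d : R) :
    ⁅a * b, c * d⁆ = a * (c * b + b * c) * d - (a * c + c * a) * (b * d)
      + c * a * (b * d + d * b) - c * (a * d + d * a) * b := by
  rw [Ring.lie_def]
  noncomm_ring

theorem filter_add_mem_Ico (a b p : ℤ) :
    (Ico a b).filter (fun m => m + p ∈ Ico a b) = Ico (a - min 0 p) (b - max 0 p) := by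
  ext m
  simp only [mem_filter, mem_Ico]
  omega

theorem sum_Ico_eq_of_eventually_const {G : Type*} [AddCommGroup G] {f : ℤ → G} {w : G}
    {lo hi a b : ℤ} (hlo : ∀ m < lo, f m = w) (hhi : ∀ m, hi ≤ m → f m = 0)
    (ha : a ≤ lo) (hlh : lo ≤ hi) (hb : hi ≤ b) :
    ∑ m ∈ Ico a b, f m = (lo - a) • w + ∑ m ∈ Ico lo hi, f m := by
  rw [← Ico_union_Ico_eq_Ico ha (hlh.trans hb), sum_union (Ico_disjoint_Ico_consecutive _ _ _),
    ← Ico_union_Ico_eq_Ico hlh hb, sum_union (Ico_disjoint_Ico_consecutive _ _ _),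
    sum_congr rfl fun m hm => hlo m (mem_Ico.1 hm).2, sum_const, Int.card_Ico,
    sum_congr rfl fun m hm => hhi m (mem_Ico.1 hm).1, sum_const_zero, add_zero,
    ← natCast_zsmul, Int.toNat_of_nonneg (sub_nonneg.2 ha)]

theorem sum_Ico_sub_sum_Ico_of_eventually_const {G : Type*} [AddCommGroup G] {f : ℤ → G}
    {w : G} {lo hi a b c d : ℤ} (hlo : ∀ m < lo, f m = w) (hhi : ∀ m, hi ≤ m → f m = 0)
    (hlh : lo ≤ hi) (ha : a ≤ lo) (hb : hi ≤ b) (hc : c ≤ lo) (hd : hi ≤ d) :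
    ∑ m ∈ Ico a b, f m - ∑ m ∈ Ico c d, f m = (c - a) • w := by
  rw [sum_Ico_eq_of_eventually_const hlo hhi ha hlh hb,
    sum_Ico_eq_of_eventually_const hlo hhi hc hlh hd, add_sub_add_right_eq_sub, ← sub_smul]
  congr 1
  abel

noncomputable section FreeFermions

variable {F : Type*} [AddCommGroup F] [Module ℂ F] (ψp ψm : ℤ → Module.End ℂ F)

def fermionBilinear (i j : ℤ) : Module.End ℂ F :=
  ψp (-i - 1) * ψm j

def bosonModeTerm (n m : ℤ) : Module.End ℂ F :=
  if 0 ≤ m + n then fermionBilinear ψp ψm m (m + n) else -(ψm (m + n) * ψp (-m - 1))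

def truncatedBosonMode (n M : ℤ) : Module.End ℂ F :=
  ∑ m ∈ Ico (-M) M, bosonModeTerm ψp ψm n m

variable {ψp ψm}

theorem fermionBilinear_lie
    (hpm : ∀ r s : ℤ, ψp r * ψm s + ψm s * ψp r = if r + s = -1 then 1 else 0)
    (hpp : ∀ r s : ℤ, ψp r * ψp s + ψp s * ψp r = 0)
    (hmm : ∀ r s : ℤ, ψm r * ψm s + ψm s * ψm r = 0) (i j k l : ℤ) :
    ⁅fermionBilinear ψp ψm i j, fermionBilinear ψp ψm k l⁆
      = (if j = k then fermionBilinear ψp ψm i l else 0)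
        - (if l = i then fermionBilinear ψp ψm k j else 0) := by
  rw [fermionBilinear, fermionBilinear, fermionBilinear, fermionBilinear,
    lie_mul_mul_eq_anticomm, hpp, hmm, hpm, hpm]
  simp only [show -k - 1 + j = -1 ↔ j = k by omega, show -i - 1 + l = -1 ↔ l = i by omega]
  split_ifs <;> simp

theorem fermionBilinear_apply_of_apply_eq_zero
    (hpm : ∀ r s : ℤ, ψp r * ψm s + ψm s * ψp r = if r + s = -1 then 1 else 0)
    {i : ℤ} {v : F} (hv : ψp (-i - 1) v = 0) (j : ℤ) :
    fermionBilinear ψp ψm i j v = if j = i then v else 0 := by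
  have h := congrArg (fun T : Module.End ℂ F => T v) (hpm (-i - 1) j)
  simp only [LinearMap.add_apply, Module.End.mul_apply, hv, map_zero, add_zero,
    show -i - 1 + j = -1 ↔ j = i by omega] at h
  rw [fermionBilinear, Module.End.mul_apply, h]
  split_ifs <;> rfl

theorem bosonModeTerm_eq_sub
    (hpm : ∀ r s : ℤ, ψp r * ψm s + ψm s * ψp r = if r + s = -1 then 1 else 0) (n m : ℤ) :
    bosonModeTerm ψp ψm n m
      = fermionBilinear ψp ψm m (m + n) - if n = 0 ∧ m < 0 then 1 else 0 := by
  by_cases h : 0 ≤ m + n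
  · rw [bosonModeTerm, if_pos h, if_neg (by omega), sub_zero]
  · have hcar := hpm (-m - 1) (m + n)
    simp only [show -m - 1 + (m + n) = -1 ↔ n = 0 ∧ m < 0 by omega] at hcar
    rw [bosonModeTerm, if_neg h, fermionBilinear, ← hcar]
    abel

theorem lie_bosonModeTerm
    (hpm : ∀ r s : ℤ, ψp r * ψm s + ψm s * ψp r = if r + s = -1 then 1 else 0)
    (hpp : ∀ r s : ℤ, ψp r * ψp s + ψp s * ψp r = 0)
    (hmm : ∀ r s : ℤ, ψm r * ψm s + ψm s * ψm r = 0) (p q m k : ℤ) :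
    ⁅bosonModeTerm ψp ψm p m, bosonModeTerm ψp ψm q k⁆
      = (if m + p = k then fermionBilinear ψp ψm m (k + q) else 0)
        - (if k + q = m then fermionBilinear ψp ψm k (m + p) else 0) := by
  rw [bosonModeTerm_eq_sub hpm, bosonModeTerm_eq_sub hpm,
    lie_sub_sub_of_commute (by split_ifs <;> simp) (by split_ifs <;> simp)
      (by split_ifs <;> simp), fermionBilinear_lie hpm hpp hmm]

theorem lie_truncatedBosonMode
    (hpm : ∀ r s : ℤ, ψp r * ψm s + ψm s * ψp r = if r + s = -1 then 1 else 0)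
    (hpp : ∀ r s : ℤ, ψp r * ψp s + ψp s * ψp r = 0)
    (hmm : ∀ r s : ℤ, ψm r * ψm s + ψm s * ψm r = 0) (p q M : ℤ) :
    ⁅truncatedBosonMode ψp ψm p M, truncatedBosonMode ψp ψm q M⁆
      = ∑ m ∈ Ico (-M - min 0 p) (M - max 0 p), fermionBilinear ψp ψm m (m + p + q)
        - ∑ m ∈ Ico (-M - min 0 q) (M - max 0 q), fermionBilinear ψp ψm m (m + p + q) := by
  simp only [truncatedBosonMode, sum_lie_sum, lie_bosonModeTerm hpm hpp hmm, sum_sub_distrib]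
  congr 1
  · simp only [sum_ite_eq, ← sum_filter, filter_add_mem_Ico]
  · rw [sum_comm]
    simp only [sum_ite_eq, ← sum_filter, filter_add_mem_Ico, add_right_comm _ q p]

theorem bosonMode_eq_truncatedBosonMode {N : ℕ} {v : F}
    (hN : ∀ m : ℤ, (N : ℤ) ≤ m → ψp m v = 0 ∧ ψm m v = 0) {n M : ℤ} (hM : N + n.natAbs ≤ M) :
    bosonMode ψp ψm n v = truncatedBosonMode ψp ψm n M v := by
  have hsupp : (Function.support fun m : ℤ => bosonModeTerm ψp ψm n m v) ⊆ Ico (-M) M := by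
    intro m hm
    contrapose! hm
    rw [coe_Ico, Set.mem_Ico] at hm
    rw [Function.notMem_support]
    by_cases h : 0 ≤ m + n
    · rw [bosonModeTerm, if_pos h, fermionBilinear, Module.End.mul_apply,
        (hN _ (by omega)).2, map_zero]
    · rw [bosonModeTerm, if_neg h, LinearMap.neg_apply, Module.End.mul_apply,
        (hN _ (by omega)).1, map_zero, neg_zero]
  rw [truncatedBosonMode, LinearMap.sum_apply, ← finsum_eq_sum_of_support_subset _ hsupp]
  refine finsum_congr fun m => ?_
  rw [bosonModeTerm, fermionBilinear]
  split_ifs <;> rfl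

end FreeFermions

/-- The operators `α_n = Σ_r :ψ⁺_{-r} ψ⁻_{r+n}:` on the fermionic
Fock space satisfy the Heisenberg commutation relations
`[α_p, α_q] = p δ_{p,-q} · Id`.  Here the fermions satisfy the
anticommutation relations `[ψ⁺_r, ψ⁻_s]₊ = δ_{r,-s}` (i.e. `r + s = 0`, which
in integer coding reads `r + s = -1`), `[ψ±_r, ψ±_s]₊ = 0`, and every vector
is annihilated by all sufficiently positive modes. -/
theorem boson_modes_heisenberg
    (F : Type*) [AddCommGroup F] [Module ℂ F]
    (ψp ψm : ℤ → Module.End ℂ F)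
    (hpm : ∀ r s : ℤ, ψp r * ψm s + ψm s * ψp r = if r + s = -1 then 1 else 0)
    (hpp : ∀ r s : ℤ, ψp r * ψp s + ψp s * ψp r = 0)
    (hmm : ∀ r s : ℤ, ψm r * ψm s + ψm s * ψm r = 0)
    (hfin : ∀ v : F, ∃ N : ℕ, ∀ m : ℤ, (N : ℤ) ≤ m → ψp m v = 0 ∧ ψm m v = 0) :
    ∀ (p q : ℤ) (v : F),
      bosonMode ψp ψm p (bosonMode ψp ψm q v) - bosonMode ψp ψm q (bosonMode ψp ψm p v)
        = if p + q = 0 then (p : ℂ) • v else 0 := by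
  intro p q v
  obtain ⟨N, hN⟩ := hfin v
  obtain ⟨Nq, hNq⟩ := hfin (bosonMode ψp ψm q v)
  obtain ⟨Np, hNp⟩ := hfin (bosonMode ψp ψm p v)
  set M : ℤ := N + Nq + Np + 2 * (p.natAbs + q.natAbs) with hM
  rw [bosonMode_eq_truncatedBosonMode hNq (M := M) (by omega),
    bosonMode_eq_truncatedBosonMode hNp (M := M) (by omega),
    bosonMode_eq_truncatedBosonMode hN (n := q) (M := M) (by omega),
    bosonMode_eq_truncatedBosonMode hN (n := p) (M := M) (by omega),
    ← Module.End.mul_apply, ← Module.End.mul_apply, ← LinearMap.sub_apply, ← Ring.lie_def,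
    lie_truncatedBosonMode hpm hpp hmm, LinearMap.sub_apply, LinearMap.sum_apply,
    LinearMap.sum_apply]
  have hlow : ∀ m < -(N : ℤ), fermionBilinear ψp ψm m (m + p + q) v
      = if p + q = 0 then v else 0 := fun m hm => by
    rw [fermionBilinear_apply_of_apply_eq_zero hpm (hN _ (by omega)).1]
    simp only [show m + p + q = m ↔ p + q = 0 by omega]
  have hhigh : ∀ m : ℤ, N + p.natAbs + q.natAbs ≤ m →
      fermionBilinear ψp ψm m (m + p + q) v = 0 :=
    fun m hm => by rw [fermionBilinear, Module.End.mul_apply, (hN _ (by omega)).2, map_zero]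
  rw [sum_Ico_sub_sum_Ico_of_eventually_const hlow hhigh (by omega) (by omega) (by omega)
    (by omega) (by omega)]
  split_ifs with hpq
  · rw [show -M - min 0 q - (-M - min 0 p) = p by omega, Int.cast_smul_eq_zsmul]
  · rw [smul_zero]
end
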